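/- arXiv:1007.1146 — 4 statements merged into one kernel-verified Lean document; each statement's English description precedes it below -/
import Mathlib

section
/- Let G = (V,E) be a finite graph and let a, b be distinct vertices such that a is the only neighbor of b (b has degree 1). Then the multivariate independent set polynomial satisfies I(G; x) = (1 + x_b) · I(G - b; y), where G - b is G with vertex b deleted, y_a = x_a/(1 + x_b), and y_v = x_v for all other vertices v. (Equivalently, as a polynomial identity: I(G; x) with variables x_a, x_b equals (1+x_b) times I(G-b) with the variable at a replaced by x_a/(1+x_b), after clearing denominators.) -/
open Finset
open scoped Classical

/-- A finset of vertices is independent in `G` if no two of its members are adjacent. -/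
def IndepSet {V : Type*} (G : SimpleGraph V) (A : Finset V) : Prop :=
  ∀ u ∈ A, ∀ v ∈ A, ¬ G.Adj u v

/-- The multivariate independent set polynomial `I(G; x)`, evaluated at real vertex weights. -/
noncomputable def indPoly {V : Type*} [Fintype V] (G : SimpleGraph V) (x : V → ℝ) : ℝ :=
  ∑ A : Finset V, if IndepSet G A then ∏ v ∈ A, x v else 0

/-- The independent set polynomial of `G - b` (vertex `b` deleted): sum over independent
sets avoiding `b` (independence in `G - b` agrees with independence in `G` for such sets). -/
noncomputable def indPolyDel {V : Type*} [Fintype V] [DecidableEq V]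
    (G : SimpleGraph V) (b : V) (y : V → ℝ) : ℝ :=
  ∑ A ∈ (Finset.univ.erase b).powerset, if IndepSet G A then ∏ v ∈ A, y v else 0

/-!
Each independent set of `G - b` either contains `a`, and then it is the only independent set of `G`
it extends to, or avoids `a`, and then both `A` and `A ∪ {b}` are independent in `G`. Dividing
`x_a` by `1 + x_b` makes both kinds contribute `(1 + x_b)` times their weight in `G - b`.
-/

section

variable {V : Type*} {G : SimpleGraph V}

theorem IndepSet.mono {A B : Finset V} (hB : IndepSet G B) (hAB : A ⊆ B) : IndepSet G A :=
  fun u hu v hv => hB u (hAB hu) v (hAB hv)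

theorem indepSet_insert_iff [DecidableEq V] {A : Finset V} {b : V} :
    IndepSet G (insert b A) ↔ IndepSet G A ∧ ∀ v ∈ A, ¬ G.Adj b v := by
  refine ⟨fun h => ⟨h.mono (subset_insert b A),
    fun v hv => h b (mem_insert_self b A) v (mem_insert_of_mem hv)⟩, ?_⟩
  rintro ⟨hA, hb⟩ u hu v hv
  rcases mem_insert.1 hu with rfl | huA <;> rcases mem_insert.1 hv with rfl | hvA
  · exact G.irrefl
  · exact hb v hvA
  · exact fun h => hb u huA h.symm
  · exact hA u huA v hvA

theorem forall_not_adj_leaf_iff {a b : V} (hadj : G.Adj a b) (honly : ∀ v, G.Adj v b → v = a)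
    {A : Finset V} : (∀ v ∈ A, ¬ G.Adj b v) ↔ a ∉ A :=
  ⟨fun h ha => h a ha hadj.symm, fun ha v hv hbv => ha (honly v hbv.symm ▸ hv)⟩

theorem indPoly_eq_sum_powerset_erase [Fintype V] [DecidableEq V] (x : V → ℝ) (b : V) :
    indPoly G x = ∑ A ∈ (univ.erase b).powerset,
      ((if IndepSet G A then ∏ v ∈ A, x v else 0)
        + if IndepSet G (insert b A) then ∏ v ∈ insert b A, x v else 0) := by
  conv_lhs => rw [indPoly, ← powerset_univ, ← insert_erase (mem_univ b)]
  rw [sum_powerset_insert (notMem_erase b univ), sum_add_distrib]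

theorem mul_prod_update_div_of_mem {ι K : Type*} [DecidableEq ι] [Field K] {s : Finset ι}
    {a : ι} (ha : a ∈ s) (x : ι → K) {c : K} (hc : c ≠ 0) :
    c * ∏ v ∈ s, Function.update x a (x a / c) v = ∏ v ∈ s, x v := by
  rw [prod_update_of_mem ha, ← mul_assoc, mul_div_cancel₀ _ hc,
    ← prod_eq_mul_prod_sdiff_singleton_of_mem ha]

end

theorem leaf_reduction_general {V : Type*} [Fintype V] [DecidableEq V]
    (G : SimpleGraph V) (a b : V) (hadj : G.Adj a b)
    (honly : ∀ v, G.Adj v b → v = a) (x : V → ℝ) (hx : 1 + x b ≠ 0) :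
    indPoly G x
      = (1 + x b) * indPolyDel G b (Function.update x a (x a / (1 + x b))) := by
  rw [indPoly_eq_sum_powerset_erase x b, indPolyDel, mul_sum]
  refine sum_congr rfl fun A hA => ?_
  have hbA : b ∉ A := fun h => notMem_erase b univ (mem_powerset.1 hA h)
  rw [indepSet_insert_iff, forall_not_adj_leaf_iff hadj honly, prod_insert hbA]
  by_cases hI : IndepSet G A
  · by_cases haA : a ∈ A
    · rw [if_pos hI, if_pos hI, mul_prod_update_div_of_mem haA x hx]
      simp [haA]
    · simp only [hI, haA, not_false_eq_true, and_self, if_true, prod_update_of_notMem haA]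
      ring
  · simp [hI]

/-- Leaf reduction: if `a` is the only neighbor of the degree-1 vertex `b`, then
`I(G; x) = (1 + x_b) · I(G - b; y)` where `y_a = x_a / (1 + x_b)` and `y_v = x_v` otherwise. -/
theorem leaf_reduction {V : Type*} [Fintype V] [DecidableEq V]
    (G : SimpleGraph V) (a b : V) (hab : a ≠ b) (hadj : G.Adj a b)
    (honly : ∀ v, G.Adj v b → v = a) (x : V → ℝ) (hx : 1 + x b ≠ 0) :
    indPoly G x
      = (1 + x b) * indPolyDel G b (Function.update x a (x a / (1 + x b))) :=
  leaf_reduction_general G a b hadj honly x hx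
end

section
/- Let G = (V,E) be a finite graph with n vertices and let k ≥ 1. Let G^(k) be the k-clone of G, the graph obtained by replacing each vertex v by k independent copies v_1,…,v_k, and joining every copy of u to every copy of v whenever uv ∈ E (copies of the same vertex are not joined). Then the univariate independent set polynomial satisfies I(G^(k); x) = I(G; (1+x)^k − 1) as an identity of polynomials in x. -/
open Finset Polynomial
open scoped Classical

/-- The (univariate) independent set polynomial `I(G; X) = Σ_{A independent} X^{|A|}`. -/
noncomputable def indPolyX {V : Type*} [Fintype V] (G : SimpleGraph V) : Polynomial ℚ :=
  ∑ A : Finset V, if IndepSet G A then (Polynomial.X : Polynomial ℚ) ^ A.card else 0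

/-- The `k`-clone of `G`: each vertex is replaced by `k` independent copies, and every
copy of `u` is joined to every copy of `v` whenever `uv` is an edge of `G`. -/
def kClone {V : Type*} (G : SimpleGraph V) (k : ℕ) : SimpleGraph (V × Fin k) where
  Adj p q := G.Adj p.1 q.1
  symm := ⟨fun p q h => G.symm.symm p.1 q.1 h⟩
  loopless := ⟨fun p h => G.loopless.irrefl p.1 h⟩

/-! An independent set of `G^(k)` amounts to a choice, for every vertex `v` of `G`, of a set
`f v ⊆ Fin k` of copies such that the vertices with `f v ≠ ∅` form an independent set `S` of `G`.
Grouping by `S`, the sets `f v` for `v ∈ S` range independently over the nonempty subsets of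
`Fin k`, each contributing `∑_{B ≠ ∅} x^|B| = (1 + x)^k - 1`, so `S` contributes
`((1 + x)^k - 1)^|S|`. -/

section PiFinset

variable {α β : Type*} [Fintype α] [Fintype β]

noncomputable def piFinsetEquivFinsetProd : (α → Finset β) ≃ Finset (α × β) where
  toFun f := univ.filter fun p => p.2 ∈ f p.1
  invFun A a := univ.filter fun b => (a, b) ∈ A
  left_inv f := by ext; simp
  right_inv A := by ext; simp

lemma card_piFinsetEquivFinsetProd (f : α → Finset β) :
    (piFinsetEquivFinsetProd f).card = ∑ a, (f a).card := by
  rw [piFinsetEquivFinsetProd, Equiv.coe_fn_mk, card_filter, Fintype.sum_prod_type]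
  simp

lemma image_fst_piFinsetEquivFinsetProd (f : α → Finset β) :
    (piFinsetEquivFinsetProd f).image Prod.fst = univ.filter fun a => (f a).Nonempty := by
  ext a
  simp only [piFinsetEquivFinsetProd, Equiv.coe_fn_mk, mem_image, mem_filter, mem_univ, true_and]
  exact ⟨fun ⟨⟨_, b⟩, hb, rfl⟩ => ⟨b, hb⟩, fun ⟨b, hb⟩ => ⟨(a, b), hb, rfl⟩⟩

variable {R : Type*} [CommRing R]

lemma sum_nonempty_pow_card (a : R) :
    ∑ B : Finset β with B.Nonempty, a ^ B.card = (1 + a) ^ Fintype.card β - 1 := by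
  have h := Fintype.sum_pow_mul_eq_add_pow β a 1
  simp only [one_pow, mul_one] at h
  rw [add_comm 1 a, ← h, ← sum_filter_add_sum_filter_not univ Finset.Nonempty]
  simp [not_nonempty_iff_eq_empty, filter_eq']

lemma sum_prod_pow_card_of_support_eq (a : R) (S : Finset α) :
    ∑ f : α → Finset β with univ.filter (fun x => (f x).Nonempty) = S, ∏ x, a ^ (f x).card
      = ((1 + a) ^ Fintype.card β - 1) ^ S.card := by
  have hfibre : univ.filter (fun f : α → Finset β => univ.filter (fun x => (f x).Nonempty) = S)
      = Fintype.piFinset fun x => if x ∈ S then univ.filter Finset.Nonempty else {∅} := by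
    ext f
    simp only [mem_filter, mem_univ, true_and, Fintype.mem_piFinset, Finset.ext_iff]
    refine forall_congr' fun x => ?_
    split_ifs with hx <;> simp [hx, not_nonempty_iff_eq_empty]
  rw [hfibre, ← prod_univ_sum (fun x => if x ∈ S then univ.filter Finset.Nonempty else {∅})
    fun _ B => a ^ B.card]
  simp only [apply_ite (fun t : Finset (Finset β) => ∑ B ∈ t, a ^ B.card), sum_singleton,
    card_empty, pow_zero, sum_nonempty_pow_card, prod_ite_mem, univ_inter, prod_const]

end PiFinset

lemma indepSet_kClone_iff {V : Type*} (G : SimpleGraph V) (k : ℕ) (A : Finset (V × Fin k)) :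
    IndepSet (kClone G k) A ↔ IndepSet G (A.image Prod.fst) := by
  constructor
  · intro h u hu v hv
    obtain ⟨p, hp, rfl⟩ := mem_image.1 hu
    obtain ⟨q, hq, rfl⟩ := mem_image.1 hv
    exact h p hp q hq
  · intro h p hp q hq
    exact h p.1 (mem_image_of_mem _ hp) q.1 (mem_image_of_mem _ hq)

lemma indPolyX_comp {V : Type*} [Fintype V] (G : SimpleGraph V) (q : ℚ[X]) :
    (indPolyX G).comp q = ∑ S : Finset V, if IndepSet G S then q ^ S.card else 0 := by
  simp only [indPolyX, Polynomial.sum_comp, apply_ite (fun p : ℚ[X] => p.comp q), X_pow_comp,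
    zero_comp]

theorem kClone_indPoly_general {V : Type*} [Fintype V] (G : SimpleGraph V) (k : ℕ) :
    indPolyX (kClone G k)
      = (indPolyX G).comp ((1 + Polynomial.X : Polynomial ℚ) ^ k - 1) := by
  calc indPolyX (kClone G k)
      = ∑ f : V → Finset (Fin k),
          if IndepSet G (univ.filter fun v => (f v).Nonempty) then ∏ v, (X : ℚ[X]) ^ (f v).card
          else 0 := by
        rw [indPolyX, ← piFinsetEquivFinsetProd.sum_comp]
        simp only [indepSet_kClone_iff, image_fst_piFinsetEquivFinsetProd,
          card_piFinsetEquivFinsetProd, prod_pow_eq_pow_sum]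
    _ = ∑ S : Finset V,
          ∑ f : V → Finset (Fin k) with (univ.filter fun v => (f v).Nonempty) = S,
          if IndepSet G S then ∏ v, (X : ℚ[X]) ^ (f v).card else 0 := by
        rw [← sum_fiberwise univ
          (fun f : V → Finset (Fin k) => univ.filter fun v => (f v).Nonempty)]
        refine sum_congr rfl fun S _ => sum_congr rfl fun f hf => ?_
        rw [(mem_filter.1 hf).2]
    _ = _ := by
        rw [indPolyX_comp]
        refine sum_congr rfl fun S _ => ?_
        split_ifs
        · rw [sum_prod_pow_card_of_support_eq, Fintype.card_fin]
        · exact sum_const_zero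

/-- Cloning identity: `I(G^(k); x) = I(G; (1+x)^k - 1)` as an identity of polynomials. -/
theorem kClone_indPoly {V : Type*} [Fintype V] (G : SimpleGraph V) (k : ℕ) (hk : 1 ≤ k) :
    indPolyX (kClone G k)
      = (indPolyX G).comp ((1 + Polynomial.X : Polynomial ℚ) ^ k - 1) :=
  kClone_indPoly_general G k
end

section
/- Let G = (V,E) be a finite graph, a₀ ∈ V, and k ≥ 1. Let P_k(G) denote G with a path of length k attached at a₀, i.e., the graph with vertex set V ∪ {a₁,…,a_k} (new vertices) and edge set E ∪ {a₀a₁, a₁a₂, …, a_{k−1}a_k}. Fix a real number x with x > −1/4 and x ≠ 0, let λ₁, λ₂ be the roots of λ² − λ − x, and suppose λ₁^{k+2} ≠ λ₂^{k+2}. Assign weight x to every vertex. Then I(P_k(G); x) = C_k · I(G; y), where y assigns weight B_k/C_k to a₀ and weight x to every other vertex of G, with B_k = (x/(λ₂−λ₁))(−λ₁^{k+1} + λ₂^{k+1}) and C_k = (1/(λ₂−λ₁))(−λ₁^{k+2} + λ₂^{k+2}). The condition λ₁^{k+2} ≠ λ₂^{k+2} guarantees C_k ≠ 0. -/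
open Finset
open scoped Classical

/-- `G` with a path `a₀a₁⋯a_k` of `k` new vertices attached at `a₀`. The new vertices are
`Sum.inr 0, …, Sum.inr (k-1)`, with `a₀ — a₁` and consecutive path edges. -/
def pathAttach {V : Type*} (G : SimpleGraph V) (a0 : V) (k : ℕ) :
    SimpleGraph (V ⊕ Fin k) :=
  SimpleGraph.fromRel (fun p q =>
    (∃ u v : V, p = Sum.inl u ∧ q = Sum.inl v ∧ G.Adj u v) ∨
    (∃ i : Fin k, p = Sum.inl a0 ∧ q = Sum.inr i ∧ (i : ℕ) = 0) ∨
    (∃ i j : Fin k, p = Sum.inr i ∧ q = Sum.inr j ∧ (i : ℕ) + 1 = (j : ℕ)))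

/-!
An independent set of `P_k(G)` is an independent set `S` of `G` together with an independent set
of the path `a₁ ⋯ a_k` that avoids `a₁` whenever `a₀ ∈ S`. Writing `P_k` and `R_k` for the
independence polynomials of the path and of the path without `a₁`, this gives
`I(P_k(G); x) = ∑_S x^|S| · (a₀ ∈ S ? R_k : P_k) = P_k · I(G; y)` with `y_{a₀} = x R_k / P_k`.
Both `P_k` and `R_k` satisfy `u_{n+2} = u_{n+1} + x u_n`, whose solutions are combinations of
`λ₁ⁿ` and `λ₂ⁿ`; the initial values give `P_k = C_k` and `x R_k = B_k`.

The path is modelled on `ℕ`, with `aᵢ₊₁` at position `i`: `pathPoly x (range k)` is `P_k` and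
`pathPoly x ((range k).erase 0)` is `R_k`.
-/

def NoConsec (T : Finset ℕ) : Prop :=
  ∀ i ∈ T, i + 1 ∉ T

noncomputable def pathPoly (x : ℝ) (s : Finset ℕ) : ℝ :=
  ∑ T ∈ s.powerset, if NoConsec T then x ^ #T else 0

@[simp]
lemma pathPoly_empty (x : ℝ) : pathPoly x ∅ = 1 := by
  simp [pathPoly, NoConsec]

@[simp]
lemma pathPoly_singleton (x : ℝ) (a : ℕ) : pathPoly x {a} = 1 + x := by
  rw [pathPoly, ← insert_empty_eq, sum_powerset_insert (notMem_empty a)]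
  simp [NoConsec]

lemma sum_powerset_erase {α M : Type*} [DecidableEq α] [AddCommMonoid M] (s : Finset α)
    (a : α) (f : Finset α → M) :
    ∑ T ∈ (s.erase a).powerset, f T = ∑ T ∈ s.powerset, if a ∉ T then f T else 0 := by
  rw [← sum_filter]
  congr 1
  ext T
  simp [subset_erase]

lemma pathPoly_erase (x : ℝ) (s : Finset ℕ) (a : ℕ) :
    pathPoly x (s.erase a) = ∑ T ∈ s.powerset, if NoConsec T ∧ a ∉ T then x ^ #T else 0 := by
  simp only [pathPoly, sum_powerset_erase, ← ite_and, and_comm]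

lemma noConsec_insert_succ_iff {T : Finset ℕ} {n : ℕ} (hT : ∀ i ∈ T, i ≤ n) :
    NoConsec (insert (n + 1) T) ↔ NoConsec T ∧ n ∉ T := by
  have h : n + 1 ∉ T := fun h => by have := hT _ h; omega
  have h' : n + 2 ∉ T := fun h => by have := hT _ h; omega
  simp only [NoConsec, mem_insert]
  grind

lemma pathPoly_insert_succ (x : ℝ) {s : Finset ℕ} {n : ℕ} (hs : ∀ i ∈ s, i ≤ n) :
    pathPoly x (insert (n + 1) s) = pathPoly x s + x * pathPoly x (s.erase n) := by
  have hn : n + 1 ∉ s := fun h => by have := hs _ h; omega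
  rw [pathPoly, sum_powerset_insert hn, pathPoly_erase, mul_sum]
  congr 1
  refine sum_congr rfl fun T hT => ?_
  have hTs := mem_powerset.1 hT
  rw [noConsec_insert_succ_iff fun i hi => hs i (hTs hi),
    card_insert_of_notMem fun h => hn (hTs h)]
  split_ifs <;> ring

lemma pathPoly_Ico_add_two (x : ℝ) {a n : ℕ} (h : a ≤ n) :
    pathPoly x (Ico a (n + 2)) = pathPoly x (Ico a (n + 1)) + x * pathPoly x (Ico a n) := by
  rw [Nat.Ico_succ_right_eq_insert_Ico (by omega : a ≤ n + 1),
    pathPoly_insert_succ x fun i hi => Nat.le_of_lt_succ (mem_Ico.1 hi).2,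
    Nat.Ico_succ_right_eq_insert_Ico h, erase_insert right_notMem_Ico]

lemma mul_sub_pathPoly_Ico {x l₁ l₂ : ℝ} (hsum : l₁ + l₂ = 1) (hprod : l₁ * l₂ = -x)
    (a m : ℕ) : (l₂ - l₁) * pathPoly x (Ico a (a + m)) = l₂ ^ (m + 2) - l₁ ^ (m + 2) := by
  induction m using Nat.twoStepInduction with
  | zero =>
    rw [add_zero, Ico_self, pathPoly_empty, mul_one]
    linear_combination (l₁ - l₂) * hsum
  | one =>
    rw [Nat.Ico_succ_singleton, pathPoly_singleton]
    linear_combination (l₂ - l₁) * (hprod - (l₁ + l₂ + 1) * hsum)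
  | more m ih₀ ih₁ =>
    rw [← add_assoc] at ih₁
    rw [← add_assoc, pathPoly_Ico_add_two x (by omega), mul_add, ih₁, mul_left_comm, ih₀]
    linear_combination l₁ ^ (m + 2) * (l₁ * hsum - hprod) - l₂ ^ (m + 2) * (l₂ * hsum - hprod)

lemma mul_sub_pathPoly_range {x l₁ l₂ : ℝ} (hsum : l₁ + l₂ = 1) (hprod : l₁ * l₂ = -x)
    (k : ℕ) : (l₂ - l₁) * pathPoly x (range k) = l₂ ^ (k + 2) - l₁ ^ (k + 2) := by
  have h := mul_sub_pathPoly_Ico hsum hprod 0 k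
  rwa [zero_add, Nat.Ico_zero_eq_range] at h

lemma mul_sub_pathPoly_range_erase_zero {x l₁ l₂ : ℝ} (hsum : l₁ + l₂ = 1)
    (hprod : l₁ * l₂ = -x) (k : ℕ) :
    (l₂ - l₁) * pathPoly x ((range k).erase 0) = l₂ ^ (k + 1) - l₁ ^ (k + 1) := by
  cases k with
  | zero => rw [range_zero, erase_empty, pathPoly_empty]; ring
  | succ j =>
    have h := mul_sub_pathPoly_Ico hsum hprod 1 j
    rwa [add_comm 1 j, Nat.Ico_succ_left_eq_erase_Ico, Nat.Ico_zero_eq_range] at h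

lemma sum_finset_fin_eq_sum_powerset_range {M : Type*} [AddCommMonoid M] (k : ℕ)
    (g : Finset ℕ → M) :
    ∑ T : Finset (Fin k), g (T.image Fin.val) = ∑ U ∈ (range k).powerset, g U := by
  have hrange : range k = univ.image (Fin.val : Fin k → ℕ) := by
    rw [← Nat.Iio_eq_range, ← Fin.map_valEmbedding_univ, map_eq_image]
    rfl
  rw [hrange, powerset_image, sum_image fun _ _ _ _ h => image_injective Fin.val_injective h,
    powerset_univ]

lemma sum_finset_fin_eq_pathPoly (x : ℝ) (k : ℕ) (p : Prop) [Decidable p] :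
    (∑ T : Finset (Fin k),
        if NoConsec (T.image Fin.val) ∧ (p → 0 ∉ T.image Fin.val) then x ^ #T else 0) =
      pathPoly x (if p then (range k).erase 0 else range k) := by
  simp_rw [← card_image_of_injective _ Fin.val_injective]
  rw [sum_finset_fin_eq_sum_powerset_range k fun U =>
    if NoConsec U ∧ (p → 0 ∉ U) then x ^ #U else 0]
  split_ifs with hp
  · simp only [hp, forall_const, pathPoly_erase]
  · simp only [hp, false_implies, and_true, pathPoly]

section PathAttach

variable {V : Type*} (G : SimpleGraph V) (a0 : V) (k : ℕ)

@[simp]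
lemma pathAttach_adj_inl_inl (u v : V) :
    (pathAttach G a0 k).Adj (.inl u) (.inl v) ↔ G.Adj u v := by
  simp only [pathAttach, exists_and_left, SimpleGraph.fromRel_adj, ne_eq, Sum.inl.injEq,
    exists_eq_left', reduceCtorEq, false_and, exists_false, and_false, and_self, or_self, or_false]
  exact ⟨fun ⟨_, h⟩ => h.elim id (·.symm), fun h => ⟨h.ne, .inl h⟩⟩

@[simp]
lemma pathAttach_adj_inl_inr (u : V) (i : Fin k) :
    (pathAttach G a0 k).Adj (.inl u) (.inr i) ↔ u = a0 ∧ (i : ℕ) = 0 := by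
  simp [pathAttach, SimpleGraph.fromRel_adj, eq_comm]

@[simp]
lemma pathAttach_adj_inr_inr (i j : Fin k) :
    (pathAttach G a0 k).Adj (.inr i) (.inr j) ↔ (i : ℕ) + 1 = j ∨ (j : ℕ) + 1 = i := by
  simp only [pathAttach, exists_and_left, SimpleGraph.fromRel_adj, ne_eq, Sum.inr.injEq,
    reduceCtorEq, false_and, exists_false, and_self, exists_eq_left', false_or,
    and_iff_right_iff_imp]
  rintro (h | h) rfl <;> omega

@[simp]
lemma pathAttach_adj_inr_inl (i : Fin k) (u : V) :
    (pathAttach G a0 k).Adj (.inr i) (.inl u) ↔ u = a0 ∧ (i : ℕ) = 0 := by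
  rw [SimpleGraph.adj_comm, pathAttach_adj_inl_inr]

lemma indepSet_pathAttach_disjSum_iff (S : Finset V) (T : Finset (Fin k)) :
    IndepSet (pathAttach G a0 k) (S.disjSum T) ↔
      IndepSet G S ∧ NoConsec (T.image Fin.val) ∧ (a0 ∈ S → 0 ∉ T.image Fin.val) := by
  simp only [IndepSet, NoConsec, Sum.forall, inl_mem_disjSum, inr_mem_disjSum,
    pathAttach_adj_inl_inl, pathAttach_adj_inl_inr, pathAttach_adj_inr_inl,
    pathAttach_adj_inr_inr, mem_image, forall_exists_index, and_imp, forall_apply_eq_imp_iff₂]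
  grind

variable [Fintype V]

lemma indPoly_pathAttach (w : V → ℝ) (x : ℝ) :
    indPoly (pathAttach G a0 k) (Sum.elim w fun _ => x) =
      ∑ S : Finset V, if IndepSet G S then
        (∏ v ∈ S, w v) * pathPoly x (if a0 ∈ S then (range k).erase 0 else range k) else 0 := by
  rw [indPoly, ← sumEquiv.symm.toEquiv.sum_comp, Fintype.sum_prod_type]
  refine sum_congr rfl fun S _ => ?_
  simp only [OrderIso.toEquiv_symm, OrderIso.coe_symm_toEquiv, sumEquiv_symm_apply,
    indepSet_pathAttach_disjSum_iff, prod_disjSum, Sum.elim_inl, Sum.elim_inr, prod_const]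
  by_cases hS : IndepSet G S
  · rw [if_pos hS, ← sum_finset_fin_eq_pathPoly, mul_sum]
    simp only [hS, true_and, mul_ite, mul_zero]
  · rw [if_neg hS]
    exact sum_eq_zero fun T _ => if_neg fun h => hS h.1

lemma indPoly_pathAttach_eq_mul_indPoly_update [DecidableEq V] (w : V → ℝ) (x : ℝ)
    (hP : pathPoly x (range k) ≠ 0) :
    indPoly (pathAttach G a0 k) (Sum.elim w fun _ => x) =
      pathPoly x (range k) * indPoly G
        (Function.update w a0 (w a0 * pathPoly x ((range k).erase 0) / pathPoly x (range k))) := by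
  rw [indPoly_pathAttach, indPoly, mul_sum]
  refine sum_congr rfl fun S _ => ?_
  by_cases hS : IndepSet G S
  · rw [if_pos hS, if_pos hS]
    by_cases ha : a0 ∈ S
    · rw [if_pos ha, prod_update_of_mem ha, prod_eq_mul_prod_sdiff_singleton_of_mem ha]
      field_simp
    · rw [if_neg ha, prod_update_of_notMem ha, mul_comm]
  · rw [if_neg hS, if_neg hS, mul_zero]

end PathAttach

theorem path_reduction_general {V : Type*} [Fintype V] [DecidableEq V]
    (G : SimpleGraph V) (a0 : V) (k : ℕ)
    (x : ℝ) (hx : x > -(1/4))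
    (l1 l2 : ℝ)
    (hl1 : l1 = 1/2 + Real.sqrt (1/4 + x)) (hl2 : l2 = 1/2 - Real.sqrt (1/4 + x))
    (hpow : l1 ^ (k + 2) ≠ l2 ^ (k + 2))
    (B C : ℝ)
    (hB : B = x / (l2 - l1) * (-(l1 ^ (k + 1)) + l2 ^ (k + 1)))
    (hC : C = 1 / (l2 - l1) * (-(l1 ^ (k + 2)) + l2 ^ (k + 2))) :
    C ≠ 0 ∧
    indPoly (pathAttach G a0 k) (fun _ => x)
      = C * indPoly G (Function.update (fun _ : V => x) a0 (B / C)) := by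
  have hsqrt := Real.sq_sqrt (by linarith : (0 : ℝ) ≤ 1/4 + x)
  have hsum : l1 + l2 = 1 := by rw [hl1, hl2]; ring
  have hprod : l1 * l2 = -x := by rw [hl1, hl2]; linear_combination -hsqrt
  have hne : l2 - l1 ≠ 0 := sub_ne_zero.2 fun h => hpow (by rw [h])
  have hPC : pathPoly x (range k) = C := by
    rw [hC]; field_simp; linear_combination mul_sub_pathPoly_range hsum hprod k
  have hRB : x * pathPoly x ((range k).erase 0) = B := by
    rw [hB]; field_simp; linear_combination x * mul_sub_pathPoly_range_erase_zero hsum hprod k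
  have hC0 : C ≠ 0 := by
    rw [hC]
    exact mul_ne_zero (one_div_ne_zero hne) fun h => hpow (by linarith)
  refine ⟨hC0, ?_⟩
  rw [← Sum.elim_lam_const_lam_const, indPoly_pathAttach_eq_mul_indPoly_update G a0 _ _ _
    (hPC ▸ hC0), hPC, hRB]

/-- Path reduction: attaching a path of length `k` at `a₀`, with all weights `x`, gives
`I(P_k(G); x) = C_k · I(G; y)` where `y` is `x` except `y_{a₀} = B_k / C_k`. -/
theorem path_reduction {V : Type*} [Fintype V] [DecidableEq V]
    (G : SimpleGraph V) (a0 : V) (k : ℕ) (hk : 1 ≤ k)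
    (x : ℝ) (hx : x > -(1/4)) (hx0 : x ≠ 0)
    (l1 l2 : ℝ)
    (hl1 : l1 = 1/2 + Real.sqrt (1/4 + x)) (hl2 : l2 = 1/2 - Real.sqrt (1/4 + x))
    (hpow : l1 ^ (k + 2) ≠ l2 ^ (k + 2))
    (B C : ℝ)
    (hB : B = x / (l2 - l1) * (-(l1 ^ (k + 1)) + l2 ^ (k + 1)))
    (hC : C = 1 / (l2 - l1) * (-(l1 ^ (k + 2)) + l2 ^ (k + 2))) :
    C ≠ 0 ∧
    indPoly (pathAttach G a0 k) (fun _ => x)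
      = C * indPoly G (Function.update (fun _ : V => x) a0 (B / C)) :=
  path_reduction_general G a0 k x hx l1 l2 hl1 hl2 hpow B C hB hC
end

section
/- Let G = (V,E) be a finite graph, x > −1/4 with x ≠ 0, λ₁, λ₂ the roots of λ² − λ − x, and S a finite multiset of nonnegative integers such that λ₁^{s+2} ≠ λ₂^{s+2} for every s ∈ S. Then I(G_S; x) = (Π_{s∈S} C_s)^{|V|} · I(G; x(S)), where G_S is the S-clone of G, C_s = (1/(λ₂−λ₁))(−λ₁^{s+2} + λ₂^{s+2}), B_s = (x/(λ₂−λ₁))(−λ₁^{s+1} + λ₂^{s+1}), and x(S) is defined by 1 + x(S) = Π_{s∈S}(1 + B_s/C_s). -/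
open Finset
open scoped Classical

/-- The `S`-clone `G_S` of `G`, where the multiset `S = {s₁,…,s_ℓ}` is given by
`s : Fin ℓ → ℕ`. The vertex `(a, ⟨i, 0⟩)` is the `i`-th clone of `a`, and `(a, ⟨i, t⟩)`
for `t ≥ 1` are the vertices of the path of length `s i` attached to it. Every clone
of `u` is joined to every clone of `v` whenever `uv ∈ E(G)`, and consecutive path
vertices (starting at the clone itself) are joined. -/
def sclone {V : Type*} (G : SimpleGraph V) {ℓ : ℕ} (s : Fin ℓ → ℕ) :
    SimpleGraph (V × Σ i : Fin ℓ, Fin (s i + 1)) :=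
  SimpleGraph.fromRel (fun u v =>
    ((u.2.2 : ℕ) = 0 ∧ (v.2.2 : ℕ) = 0 ∧ G.Adj u.1 v.1) ∨
    (u.1 = v.1 ∧ u.2.1 = v.2.1 ∧ (u.2.2 : ℕ) + 1 = (v.2.2 : ℕ)))

namespace ScloneProof

/-- instance-free conditional -/
noncomputable def cnd (p : Prop) (r : ℝ) : ℝ := if p then r else 0

lemma cnd_pos {p : Prop} (h : p) (r : ℝ) : cnd p r = r := if_pos h

lemma cnd_neg {p : Prop} (h : ¬p) (r : ℝ) : cnd p r = 0 := if_neg h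

lemma ite_eq_cnd {p : Prop} [Decidable p] (r : ℝ) : (if p then r else 0) = cnd p r := by
  unfold cnd
  by_cases h : p <;> simp [h]

lemma cnd_congr {p q : Prop} {r r' : ℝ} (h : p ↔ q) (hr : r = r') : cnd p r = cnd q r' := by
  unfold cnd
  rw [hr]
  exact if_congr h rfl rfl

/-- weight of a boolean configuration -/
noncomputable def wt (x : ℝ) {α : Type*} [Fintype α] (g : α → Bool) : ℝ :=
  ∏ a, (if g a then x else 1)

/-- path-independence of a boolean configuration on a path -/
def pok {n : ℕ} (g : Fin n → Bool) : Prop :=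
  ∀ t u : Fin n, g t = true → g u = true → (t : ℕ) + 1 ≠ (u : ℕ)

noncomputable def Z0 (x : ℝ) (n : ℕ) : ℝ :=
  ∑ g : Fin (n+1) → Bool, cnd (pok g ∧ g 0 = false) (wt x g)

noncomputable def Z1 (x : ℝ) (n : ℕ) : ℝ :=
  ∑ g : Fin (n+1) → Bool, cnd (pok g ∧ g 0 = true) (wt x g)

noncomputable def Zt (x : ℝ) (n : ℕ) : ℝ :=
  ∑ g : Fin (n+1) → Bool, cnd (pok g) (wt x g)

lemma sum_cons (n : ℕ) (F : (Fin (n+1) → Bool) → ℝ) :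
    ∑ g : Fin (n+1) → Bool, F g = ∑ b : Bool, ∑ h : Fin n → Bool, F (Fin.cons b h) := by
  calc ∑ g : Fin (n+1) → Bool, F g
      = ∑ p : Bool × (Fin n → Bool), F (Fin.cons p.1 p.2) :=
        (Fintype.sum_equiv (Fin.consEquiv fun _ => Bool)
          (fun p => F (Fin.cons p.1 p.2)) F (fun p => rfl)).symm
    _ = ∑ b : Bool, ∑ h : Fin n → Bool, F (Fin.cons b h) := Fintype.sum_prod_type _

lemma wt_cons (x : ℝ) (n : ℕ) (b : Bool) (h : Fin n → Bool) :
    wt x (Fin.cons b h) = (if b then x else 1) * wt x h := by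
  unfold wt
  rw [Fin.prod_univ_succ]
  simp

lemma pok_cons_false {n : ℕ} (h : Fin n → Bool) : pok (Fin.cons false h) ↔ pok h := by
  constructor
  · intro H i j hi hj
    have := H i.succ j.succ (by simpa using hi) (by simpa using hj)
    simp only [Fin.val_succ] at this
    omega
  · intro H t u ht hu
    rcases Fin.eq_zero_or_eq_succ t with rfl | ⟨i, rfl⟩
    · simp at ht
    rcases Fin.eq_zero_or_eq_succ u with rfl | ⟨j, rfl⟩
    · simp only [Fin.val_zero, Fin.val_succ]; omega
    · have := H i j (by simpa using ht) (by simpa using hu)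
      simp only [Fin.val_succ]
      omega

lemma pok_cons_true {n : ℕ} (h : Fin (n+1) → Bool) :
    pok (Fin.cons true h) ↔ pok h ∧ h 0 = false := by
  constructor
  · intro H
    refine ⟨fun i j hi hj => ?_, ?_⟩
    · have := H i.succ j.succ (by simpa using hi) (by simpa using hj)
      simp only [Fin.val_succ] at this
      omega
    · by_contra hh
      have h0 : h 0 = true := by simpa using hh
      have := H 0 (Fin.succ 0) (by simp) (by simpa using h0)
      simp at this
  · rintro ⟨H, h0⟩ t u ht hu
    rcases Fin.eq_zero_or_eq_succ t with rfl | ⟨i, rfl⟩ <;>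
      rcases Fin.eq_zero_or_eq_succ u with rfl | ⟨j, rfl⟩
    · simp
    · have hj : h j = true := by simpa using hu
      simp only [Fin.val_zero, Fin.val_succ]
      intro e
      have hj0 : j = 0 := by
        apply Fin.ext
        simpa using e.symm
      rw [hj0, h0] at hj
      simp at hj
    · simp only [Fin.val_succ, Fin.val_zero]; omega
    · have := H i j (by simpa using ht) (by simpa using hu)
      simp only [Fin.val_succ]
      omega

lemma pok_one (g : Fin 1 → Bool) : pok g := by
  intro t u _ _
  have := t.isLt; have := u.isLt
  omega

lemma sum_fun_fin_one (F : (Fin 1 → Bool) → ℝ) :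
    ∑ g : Fin 1 → Bool, F g = F (fun _ => true) + F (fun _ => false) := by
  rw [Fintype.sum_equiv (Equiv.funUnique (Fin 1) Bool) F (fun b => F (fun _ => b))
    (fun g => by
      congr 1
      funext i
      rw [Subsingleton.elim i default]
      rfl)]
  exact Fintype.sum_bool _

lemma wt_const_fin1 (x : ℝ) (b : Bool) : wt x (fun _ : Fin 1 => b) = if b then x else 1 := by
  unfold wt
  rw [Fin.prod_univ_one]

lemma Z0_zero (x : ℝ) : Z0 x 0 = 1 := by
  unfold Z0
  rw [sum_fun_fin_one]
  simp [cnd, pok_one, wt_const_fin1]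

lemma Z1_zero (x : ℝ) : Z1 x 0 = x := by
  unfold Z1
  rw [sum_fun_fin_one]
  simp [cnd, pok_one, wt_const_fin1]

lemma Z0_succ (x : ℝ) (n : ℕ) : Z0 x (n+1) = Zt x n := by
  unfold Z0 Zt
  simp only [cnd]
  rw [sum_cons, Fintype.sum_bool]
  simp only [Fin.cons_zero, Bool.true_eq_false, and_false, if_false, Finset.sum_const_zero,
    zero_add, pok_cons_false, and_true, wt_cons]
  simp

lemma Z1_succ (x : ℝ) (n : ℕ) : Z1 x (n+1) = x * Z0 x n := by
  unfold Z1 Z0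
  simp only [cnd]
  rw [sum_cons, Fintype.sum_bool, Finset.mul_sum]
  simp only [Fin.cons_zero, Bool.false_eq_true, and_false, if_false, Finset.sum_const_zero,
    add_zero, pok_cons_true, and_true, wt_cons, if_true]
  apply Finset.sum_congr rfl
  intro g _
  by_cases h : pok g ∧ g 0 = false <;> simp [h]

lemma Zt_eq (x : ℝ) (n : ℕ) : Zt x n = Z0 x n + Z1 x n := by
  unfold Zt Z0 Z1
  rw [← Finset.sum_add_distrib]
  apply Finset.sum_congr rfl
  intro g _
  by_cases hp : pok g
  · cases hq : g 0 <;> simp [cnd, hp, hq]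
  · simp [cnd, hp]

lemma cnd_all_prod {α : Type*} [Fintype α] (p : α → Prop) (f : α → ℝ) :
    cnd (∀ a, p a) (∏ a, f a) = ∏ a, cnd (p a) (f a) := by
  by_cases h : ∀ a, p a
  · rw [cnd_pos h]
    exact Finset.prod_congr rfl fun a _ => (cnd_pos (h a) _).symm
  · rw [cnd_neg h]
    push_neg at h
    obtain ⟨a, ha⟩ := h
    exact (Finset.prod_eq_zero (Finset.mem_univ a) (cnd_neg ha _)).symm

lemma sum_pi_prod {α : Type*} [Fintype α] [DecidableEq α] {T : α → Type*} [∀ a, Fintype (T a)]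
    (φ : ∀ a, T a → ℝ) :
    ∑ F : ∀ a, T a, ∏ a, φ a (F a) = ∏ a, ∑ h : T a, φ a h := by
  rw [Finset.prod_univ_sum (fun _ => Finset.univ) φ, Fintype.piFinset_univ]

lemma cnd_sum_eq {α : Type*} [Fintype α] [DecidableEq α] (a : α) (b : α → ℝ) :
    ∑ c : α, cnd (a = c) (b c) = b a := by
  rw [Finset.sum_eq_single a]
  · exact cnd_pos rfl _
  · intro c _ hca
    exact cnd_neg (fun h => hca h.symm) _
  · intro h
    exact absurd (Finset.mem_univ a) h

noncomputable def fsEquiv (α : Type*) [Fintype α] [DecidableEq α] : Finset α ≃ (α → Bool) where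
  toFun A a := decide (a ∈ A)
  invFun g := Finset.univ.filter (fun a => g a = true)
  left_inv A := by ext a; simp
  right_inv g := by funext a; simp

lemma sum_finset_eq_sum_bool {α : Type*} [Fintype α] [DecidableEq α] (f : Finset α → ℝ) :
    ∑ A : Finset α, f A = ∑ g : α → Bool, f (Finset.univ.filter (fun a => g a = true)) :=
  Fintype.sum_equiv (fsEquiv α) _ _
    (fun A => (congrArg f ((fsEquiv α).left_inv A)).symm)

lemma prod_filter_wt (x : ℝ) {α : Type*} [Fintype α] [DecidableEq α] (g : α → Bool) :
    (∏ _v ∈ Finset.univ.filter (fun a => g a = true), x) = wt x g := by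
  unfold wt
  rw [Finset.prod_filter]

lemma indep_filter_iff {V : Type*} [Fintype V] [DecidableEq V] (G : SimpleGraph V)
    {ℓ : ℕ} (s : Fin ℓ → ℕ) (g : (V × Σ i : Fin ℓ, Fin (s i + 1)) → Bool) :
    IndepSet (sclone G s) (Finset.univ.filter fun w => g w = true) ↔
      (∀ a i, pok (fun t => g (a, ⟨i, t⟩))) ∧
      (∀ a b, G.Adj a b →
        ¬((∃ i, g (a, ⟨i, 0⟩) = true) ∧ (∃ j, g (b, ⟨j, 0⟩) = true))) := by
  unfold IndepSet
  simp only [Finset.mem_filter, Finset.mem_univ, true_and]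
  constructor
  · intro H
    constructor
    · intro a i t u ht hu e
      refine H _ ht _ hu ?_
      simp only [sclone, SimpleGraph.fromRel_adj]
      refine ⟨?_, Or.inl (Or.inr ⟨trivial, trivial, e⟩)⟩
      intro h
      have := congrArg (fun w : (V × Σ i : Fin ℓ, Fin (s i + 1)) => ((w.2.2 : ℕ))) h
      simp only at this
      omega
    · rintro a b hab ⟨⟨i, hi⟩, ⟨j, hj⟩⟩
      refine H _ hi _ hj ?_
      simp only [sclone, SimpleGraph.fromRel_adj]
      refine ⟨?_, Or.inl (Or.inl ⟨by simp, by simp, hab⟩)⟩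
      intro h
      exact hab.ne (congrArg Prod.fst h)
  · rintro ⟨H1, H2⟩ u hu v hv hadj
    simp only [sclone, SimpleGraph.fromRel_adj] at hadj
    obtain ⟨hne, hr⟩ := hadj
    rcases u with ⟨a, i, t⟩
    rcases v with ⟨b, j, r⟩
    rcases hr with (⟨h0t, h0r, hAdj⟩ | ⟨hab, hij, hsucc⟩) | (⟨h0r, h0t, hAdj⟩ | ⟨hab, hij, hsucc⟩)
    · refine H2 a b hAdj ⟨⟨i, ?_⟩, ⟨j, ?_⟩⟩
      · have h0 : (0 : Fin (s i + 1)) = t := Fin.ext (by simpa using h0t.symm)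
        rw [h0]; exact hu
      · have h0 : (0 : Fin (s j + 1)) = r := Fin.ext (by simpa using h0r.symm)
        rw [h0]; exact hv
    · dsimp only at hab hij hsucc
      subst hab; subst hij
      exact H1 _ _ _ _ hu hv hsucc
    · refine H2 b a hAdj ⟨⟨j, ?_⟩, ⟨i, ?_⟩⟩
      · have h0 : (0 : Fin (s j + 1)) = r := Fin.ext (by simpa using h0r.symm)
        rw [h0]; exact hv
      · have h0 : (0 : Fin (s i + 1)) = t := Fin.ext (by simpa using h0t.symm)
        rw [h0]; exact hu
    · dsimp only at hab hij hsucc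
      subst hab; subst hij
      exact H1 _ _ _ _ hv hu hsucc

set_option maxHeartbeats 1000000 in
lemma gadget0 (x : ℝ) {ℓ : ℕ} (s : Fin ℓ → ℕ) :
    ∑ h : (i : Fin ℓ) → Fin (s i + 1) → Bool,
      cnd ((∀ i, pok (h i)) ∧ ¬(∃ i, h i 0 = true)) (∏ i, wt x (h i))
      = ∏ i, Z0 x (s i) := by
  have key : ∀ h : (i : Fin ℓ) → Fin (s i + 1) → Bool,
      ((∀ i, pok (h i)) ∧ ¬(∃ i, h i 0 = true)) ↔ (∀ i, pok (h i) ∧ h i 0 = false) := by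
    intro h
    push_neg
    constructor
    · rintro ⟨hp, ho⟩ i
      exact ⟨hp i, by simpa using ho i⟩
    · intro hh
      exact ⟨fun i => (hh i).1, fun i => by simp [(hh i).2]⟩
  calc ∑ h : (i : Fin ℓ) → Fin (s i + 1) → Bool,
        cnd ((∀ i, pok (h i)) ∧ ¬(∃ i, h i 0 = true)) (∏ i, wt x (h i))
      = ∑ h : (i : Fin ℓ) → Fin (s i + 1) → Bool,
          ∏ i, cnd (pok (h i) ∧ h i 0 = false) (wt x (h i)) := by
        refine Finset.sum_congr rfl fun h _ => ?_
        exact (cnd_congr (key h) rfl).trans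
          (cnd_all_prod (fun i => pok (h i) ∧ h i 0 = false) (fun i => wt x (h i)))
    _ = ∏ i, ∑ k : Fin (s i + 1) → Bool, cnd (pok k ∧ k 0 = false) (wt x k) :=
        sum_pi_prod (α := Fin ℓ) (T := fun i => Fin (s i + 1) → Bool)
          (fun i k => cnd (pok k ∧ k 0 = false) (wt x k))
    _ = ∏ i, Z0 x (s i) := rfl

set_option maxHeartbeats 1000000 in
lemma gadgett (x : ℝ) {ℓ : ℕ} (s : Fin ℓ → ℕ) :
    ∑ h : (i : Fin ℓ) → Fin (s i + 1) → Bool,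
      cnd (∀ i, pok (h i)) (∏ i, wt x (h i))
      = ∏ i, Zt x (s i) := by
  calc ∑ h : (i : Fin ℓ) → Fin (s i + 1) → Bool,
        cnd (∀ i, pok (h i)) (∏ i, wt x (h i))
      = ∑ h : (i : Fin ℓ) → Fin (s i + 1) → Bool,
          ∏ i, cnd (pok (h i)) (wt x (h i)) := by
        refine Finset.sum_congr rfl fun h _ => ?_
        exact cnd_all_prod (fun i => pok (h i)) (fun i => wt x (h i))
    _ = ∏ i, ∑ k : Fin (s i + 1) → Bool, cnd (pok k) (wt x k) :=
        sum_pi_prod (α := Fin ℓ) (T := fun i => Fin (s i + 1) → Bool)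
          (fun i k => cnd (pok k) (wt x k))
    _ = ∏ i, Zt x (s i) := rfl

set_option maxHeartbeats 1000000 in
lemma gadget1 (x : ℝ) {ℓ : ℕ} (s : Fin ℓ → ℕ) :
    ∑ h : (i : Fin ℓ) → Fin (s i + 1) → Bool,
      cnd ((∀ i, pok (h i)) ∧ (∃ i, h i 0 = true)) (∏ i, wt x (h i))
      = ∏ i, Zt x (s i) - ∏ i, Z0 x (s i) := by
  rw [← gadgett x s, ← gadget0 x s, ← Finset.sum_sub_distrib]
  refine Finset.sum_congr rfl fun h _ => ?_
  by_cases hp : ∀ i, pok (h i)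
  · by_cases ho : ∃ i, h i 0 = true
    · simp [cnd, hp, ho]
    · simp [cnd, hp, ho]
  · simp [cnd, hp]

set_option maxHeartbeats 1600000 in
lemma master {V : Type*} [Fintype V] [DecidableEq V] (G : SimpleGraph V)
    {T : Type*} [Fintype T] (pk : T → Prop) (oc : T → Prop) (w : T → ℝ)
    (U0 U1 : ℝ)
    (hU0 : ∑ h : T, cnd (pk h ∧ ¬ oc h) (w h) = U0)
    (hU1 : ∑ h : T, cnd (pk h ∧ oc h) (w h) = U1) :
    (∑ F : V → T, cnd ((∀ a, pk (F a)) ∧ (∀ a b, G.Adj a b → ¬(oc (F a) ∧ oc (F b))))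
        (∏ a, w (F a)))
      = ∑ A : Finset V, cnd (IndepSet G A)
          (U1 ^ A.card * U0 ^ (Fintype.card V - A.card)) := by
  calc (∑ F : V → T, cnd ((∀ a, pk (F a)) ∧ (∀ a b, G.Adj a b → ¬(oc (F a) ∧ oc (F b))))
        (∏ a, w (F a)))
      = ∑ F : V → T, ∑ A : Finset V,
          cnd ((Finset.univ.filter fun a => oc (F a)) = A)
            (cnd ((∀ a, pk (F a)) ∧ IndepSet G A) (∏ a, w (F a))) := by
        refine Finset.sum_congr rfl fun F _ => ?_
        rw [cnd_sum_eq]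
        refine (cnd_congr (and_congr_right fun _ => ?_) rfl)
        unfold IndepSet
        simp only [Finset.mem_filter, Finset.mem_univ, true_and]
        constructor
        · intro H u hu v hv hadj
          exact H u v hadj ⟨hu, hv⟩
        · rintro H a b hadj ⟨ha, hb⟩
          exact H a ha b hb hadj
    _ = ∑ A : Finset V, ∑ F : V → T,
          cnd ((Finset.univ.filter fun a => oc (F a)) = A)
            (cnd ((∀ a, pk (F a)) ∧ IndepSet G A) (∏ a, w (F a))) :=
        Finset.sum_comm
    _ = ∑ A : Finset V, cnd (IndepSet G A)
          (∑ F : V → T, cnd (∀ a, pk (F a) ∧ (oc (F a) ↔ a ∈ A)) (∏ a, w (F a))) := by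
        refine Finset.sum_congr rfl fun A _ => ?_
        by_cases hA : IndepSet G A
        · rw [cnd_pos hA]
          refine Finset.sum_congr rfl fun F _ => ?_
          have hiff : (∀ a, pk (F a) ∧ (oc (F a) ↔ a ∈ A)) ↔
              ((Finset.univ.filter fun a => oc (F a)) = A ∧ ∀ a, pk (F a)) := by
            rw [Finset.ext_iff]
            simp only [Finset.mem_filter, Finset.mem_univ, true_and]
            constructor
            · intro h
              exact ⟨fun a => (h a).2, fun a => (h a).1⟩
            · rintro ⟨hf, hp⟩ a
              exact ⟨hp a, hf a⟩
          rw [cnd_congr hiff rfl]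
          by_cases h1 : (Finset.univ.filter fun a => oc (F a)) = A <;>
            by_cases h2 : ∀ a, pk (F a) <;> simp [cnd, h1, h2, hA]
        · rw [cnd_neg hA]
          refine Finset.sum_eq_zero fun F _ => ?_
          by_cases h1 : (Finset.univ.filter fun a => oc (F a)) = A <;> simp [cnd, h1, hA]
    _ = ∑ A : Finset V, cnd (IndepSet G A) (∏ a, (if a ∈ A then U1 else U0)) := by
        refine Finset.sum_congr rfl fun A _ => ?_
        refine cnd_congr Iff.rfl ?_
        calc (∑ F : V → T, cnd (∀ a, pk (F a) ∧ (oc (F a) ↔ a ∈ A)) (∏ a, w (F a)))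
            = ∑ F : V → T, ∏ a, cnd (pk (F a) ∧ (oc (F a) ↔ a ∈ A)) (w (F a)) := by
              refine Finset.sum_congr rfl fun F _ => ?_
              exact cnd_all_prod (fun a => pk (F a) ∧ (oc (F a) ↔ a ∈ A)) (fun a => w (F a))
          _ = ∏ a, ∑ h : T, cnd (pk h ∧ (oc h ↔ a ∈ A)) (w h) :=
              sum_pi_prod (α := V) (T := fun _ : V => T)
                (fun a h => cnd (pk h ∧ (oc h ↔ a ∈ A)) (w h))
          _ = ∏ a, (if a ∈ A then U1 else U0) := by
              refine Finset.prod_congr rfl fun a _ => ?_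
              by_cases ha : a ∈ A
              · rw [if_pos ha, ← hU1]
                refine Finset.sum_congr rfl fun h _ => ?_
                refine cnd_congr (and_congr_right fun _ => ?_) rfl
                simp [ha]
              · rw [if_neg ha, ← hU0]
                refine Finset.sum_congr rfl fun h _ => ?_
                refine cnd_congr (and_congr_right fun _ => ?_) rfl
                simp [ha]
    _ = ∑ A : Finset V, cnd (IndepSet G A)
          (U1 ^ A.card * U0 ^ (Fintype.card V - A.card)) := by
        refine Finset.sum_congr rfl fun A _ => ?_
        refine cnd_congr Iff.rfl ?_
        rw [← Finset.prod_mul_prod_compl A]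
        congr 1
        · rw [Finset.prod_congr rfl fun a ha => if_pos ha, Finset.prod_const]
        · rw [Finset.prod_congr rfl fun a ha => if_neg (Finset.mem_compl.mp ha),
            Finset.prod_const, Finset.card_compl]

end ScloneProof

open ScloneProof

set_option maxHeartbeats 1600000

/-- `S`-cloning identity: if `λ₁^{s+2} ≠ λ₂^{s+2}` for every `s ∈ S`, then
`I(G_S; x) = (Π_{s∈S} C_s)^{|V|} · I(G; x(S))` with `1 + x(S) = Π_{s∈S}(1 + B_s/C_s)`. -/
theorem sclone_indPoly {V : Type*} [Fintype V] [DecidableEq V] (G : SimpleGraph V)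
    (x : ℝ) (hx : x > -(1/4)) (hx0 : x ≠ 0)
    (l1 l2 : ℝ)
    (hl1 : l1 = 1/2 + Real.sqrt (1/4 + x)) (hl2 : l2 = 1/2 - Real.sqrt (1/4 + x))
    (ℓ : ℕ) (s : Fin ℓ → ℕ)
    (hcompat : ∀ i : Fin ℓ, l1 ^ (s i + 2) ≠ l2 ^ (s i + 2))
    (B C : ℕ → ℝ)
    (hB : ∀ k, B k = x / (l2 - l1) * (-(l1 ^ (k + 1)) + l2 ^ (k + 1)))
    (hC : ∀ k, C k = 1 / (l2 - l1) * (-(l1 ^ (k + 2)) + l2 ^ (k + 2)))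
    (xS : ℝ) (hxS : 1 + xS = ∏ i : Fin ℓ, (1 + B (s i) / C (s i))) :
    indPoly (sclone G s) (fun _ => x)
      = (∏ i : Fin ℓ, C (s i)) ^ (Fintype.card V) * indPoly G (fun _ => xS) := by
  classical
  -- algebraic facts about l1, l2, B, C
  have hge : (0:ℝ) < 1/4 + x := by linarith
  have hrsq : Real.sqrt (1/4 + x) ^ 2 = 1/4 + x := Real.sq_sqrt hge.le
  have hrpos : 0 < Real.sqrt (1/4 + x) := Real.sqrt_pos.mpr hge
  have h1 : l1 ^ 2 = l1 + x := by rw [hl1]; linear_combination hrsq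
  have h2 : l2 ^ 2 = l2 + x := by rw [hl2]; linear_combination hrsq
  have hdne : l2 - l1 ≠ 0 := by
    rw [hl1, hl2]; intro h; nlinarith
  have hC0 : C 0 = 1 := by
    have e : -(l1 ^ (0 + 2)) + l2 ^ (0 + 2) = l2 - l1 := by
      norm_num
      linear_combination h2 - h1
    rw [hC 0, e]
    field_simp
  have hC1 : C 1 = 1 + x := by
    have e : -(l1 ^ (1 + 2)) + l2 ^ (1 + 2) = (l2 - l1) * (1 + x) := by
      norm_num
      linear_combination (l2 + 1) * h2 - (l1 + 1) * h1
    rw [hC 1, e]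
    field_simp
  have hCrec : ∀ n, C (n + 2) = C (n + 1) + x * C n := by
    intro n
    rw [hC, hC, hC]
    linear_combination (1/(l2 - l1)) * ((l2 ^ n * l2 ^ 2) * h2 - (l1 ^ n * l1 ^ 2) * h1)
  have hCB : ∀ k, C k + B k = C (k + 1) := by
    intro k
    rw [hC, hB, hC]
    linear_combination (1/(l2 - l1)) * ((l1 ^ k * l1) * h1 - (l2 ^ k * l2) * h2)
  have hCne : ∀ i : Fin ℓ, C (s i) ≠ 0 := by
    intro i
    rw [hC]
    exact mul_ne_zero (one_div_ne_zero hdne) (fun h => hcompat i (by linarith))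
  have hZ0C : ∀ n, Z0 x n = C n ∧ Z0 x (n + 1) = C (n + 1) := by
    intro n
    induction n with
    | zero =>
      refine ⟨by rw [Z0_zero, hC0], ?_⟩
      rw [Z0_succ, Zt_eq, Z0_zero, Z1_zero, hC1]
    | succ n ih =>
      refine ⟨ih.2, ?_⟩
      rw [Z0_succ, Zt_eq, Z1_succ, ih.1, ih.2]
      linarith [hCrec n]
  have hZt : ∀ n, Zt x n = C n + B n := by
    intro n
    rw [← Z0_succ, (hZ0C n).2]
    linarith [hCB n]
  -- combinatorial reduction
  have step1 : indPoly (sclone G s) (fun _ => x)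
      = ∑ g : (V × Σ i : Fin ℓ, Fin (s i + 1)) → Bool,
          cnd ((∀ a i, pok (fun t => g (a, ⟨i, t⟩))) ∧
              (∀ a b, G.Adj a b →
                ¬((∃ i, g (a, ⟨i, 0⟩) = true) ∧ (∃ j, g (b, ⟨j, 0⟩) = true))))
            (wt x g) := by
    unfold indPoly
    rw [sum_finset_eq_sum_bool]
    refine Finset.sum_congr rfl fun g _ => ?_
    exact (ite_eq_cnd _).trans
      (cnd_congr (indep_filter_iff G s g) (prod_filter_wt x g))
  have step2 : (∑ g : (V × Σ i : Fin ℓ, Fin (s i + 1)) → Bool,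
          cnd ((∀ a i, pok (fun t => g (a, ⟨i, t⟩))) ∧
              (∀ a b, G.Adj a b →
                ¬((∃ i, g (a, ⟨i, 0⟩) = true) ∧ (∃ j, g (b, ⟨j, 0⟩) = true))))
            (wt x g))
      = ∑ F : V → ((i : Fin ℓ) → Fin (s i + 1) → Bool),
          cnd ((∀ a, (∀ i, pok (F a i))) ∧
              (∀ a b, G.Adj a b →
                ¬((∃ i, F a i 0 = true) ∧ (∃ j, F b j 0 = true))))
            (∏ a, ∏ i, wt x (F a i)) := by
    refine Fintype.sum_equiv
      ⟨fun g a i t => g (a, ⟨i, t⟩), fun F w => F w.1 w.2.1 w.2.2,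
        fun g => rfl, fun F => rfl⟩ _ _ fun g => ?_
    refine cnd_congr Iff.rfl ?_
    show wt x g = ∏ a, ∏ i, wt x (fun t => g (a, ⟨i, t⟩))
    unfold wt
    rw [Fintype.prod_prod_type]
    refine Finset.prod_congr rfl fun a _ => ?_
    rw [← Finset.univ_sigma_univ, Finset.prod_sigma]
  have step3 := master (T := (i : Fin ℓ) → Fin (s i + 1) → Bool) G
      (fun h => ∀ i, pok (h i)) (fun h => ∃ i, h i 0 = true)
      (fun h => ∏ i, wt x (h i)) _ _ (gadget0 x s) (gadget1 x s)
  have main := step1.trans (step2.trans step3)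
  rw [main]
  unfold indPoly
  rw [Finset.mul_sum]
  have hU0v : (∏ i, Z0 x (s i)) = ∏ i, C (s i) :=
    Finset.prod_congr rfl fun i _ => (hZ0C (s i)).1
  have hU1v : (∏ i, Zt x (s i)) - (∏ i, Z0 x (s i)) = (∏ i, C (s i)) * xS := by
    have ht : (∏ i, Zt x (s i)) = (∏ i, C (s i)) * (1 + xS) := by
      rw [hxS, ← Finset.prod_mul_distrib]
      refine Finset.prod_congr rfl fun i _ => ?_
      rw [hZt]
      field_simp [hCne i]
    rw [ht, hU0v]
    ring
  refine Finset.sum_congr rfl fun A _ => ?_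
  by_cases hA : IndepSet G A
  · rw [cnd_pos hA, if_pos hA, hU1v, hU0v, Finset.prod_const, mul_pow]
    have hcard : A.card + (Fintype.card V - A.card) = Fintype.card V := by
      have := Finset.card_le_univ A
      omega
    calc (∏ i, C (s i)) ^ A.card * xS ^ A.card * (∏ i, C (s i)) ^ (Fintype.card V - A.card)
        = ((∏ i, C (s i)) ^ A.card * (∏ i, C (s i)) ^ (Fintype.card V - A.card)) * xS ^ A.card := by
          ring
      _ = (∏ i, C (s i)) ^ (Fintype.card V) * xS ^ A.card := by rw [← pow_add, hcard]
  · rw [cnd_neg hA, if_neg hA, mul_zero]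
end
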